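/- Let Σ, Σ₀ be symmetric positive definite n×n matrices, T > 0, G(t) = (Σ + Σ₀t)⁻¹Σ₀, and Θ(t) = −((Σ₀⁻¹ + Σ⁻¹T)⁻¹ + 2∫_t^T G(s)ᵀΣG(s) ds). Then Θ(t)Σ₀⁻¹Σ = ΣΣ₀⁻¹Θ(t) for all t ∈ [0,T]. -/

import Mathlib

open Matrix intervalIntegral

attribute [local instance] Matrix.normedAddCommGroup Matrix.normedSpace

/-- `G(t) = (Σ + Σ₀t)⁻¹ Σ₀`. -/
noncomputable def stmt15G (n : ℕ) (Sig Sig₀ : Matrix (Fin n) (Fin n) ℝ) (t : ℝ) :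
    Matrix (Fin n) (Fin n) ℝ :=
  (Sig + t • Sig₀)⁻¹ * Sig₀

/-- `Θ(t) = −((Σ₀⁻¹ + Σ⁻¹T)⁻¹ + 2∫_t^T G(s)ᵀ Σ G(s) ds)`. -/
noncomputable def stmt15Θ (n : ℕ) (Sig Sig₀ : Matrix (Fin n) (Fin n) ℝ) (T t : ℝ) :
    Matrix (Fin n) (Fin n) ℝ :=
  -((Sig₀⁻¹ + T • Sig⁻¹)⁻¹ +
      (2:ℝ) • ∫ s in t..T, (stmt15G n Sig Sig₀ s)ᵀ * Sig * stmt15G n Sig Sig₀ s)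

/-!
Both summands of `Θ(t)` intertwine `Σ₀⁻¹Σ` with `ΣΣ₀⁻¹`, i.e. satisfy `X Σ₀⁻¹Σ = ΣΣ₀⁻¹ X`.
For `K = Σ₀⁻¹ + TΣ⁻¹` one checks `K ΣΣ₀⁻¹ = Σ₀⁻¹Σ K` directly, and inverting `K` swaps the two
sides. For the integrand, with `B = Σ + sΣ₀` and `G = B⁻¹Σ₀`, substituting `Σ = B - sΣ₀` shows
`ΣB⁻¹Σ₀ = Σ₀B⁻¹Σ`, i.e. `ΣG = GᵀΣ`, which gives the intertwining pointwise; it passes to the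
integral because multiplication by the invertible matrices `Σ₀⁻¹Σ` and `ΣΣ₀⁻¹` is a linear
automorphism, and these commute with integrals without any integrability assumption.
-/

theorem ContinuousLinearEquiv.intervalIntegral_comp_comm {𝕜 E F : Type*} [RCLike 𝕜]
    [NormedAddCommGroup E] [NormedSpace ℝ E] [NormedSpace 𝕜 E] [NormedAddCommGroup F]
    [NormedSpace ℝ F] [NormedSpace 𝕜 F] {μ : MeasureTheory.Measure ℝ} (L : E ≃L[𝕜] F)
    (f : ℝ → E) (a b : ℝ) :
    ∫ x in a..b, L (f x) ∂μ = L (∫ x in a..b, f x ∂μ) := by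
  simp only [intervalIntegral, map_sub, L.integral_comp_comm]

theorem SemiconjBy.nonsing_inv_symm_left {n α : Type*} [Fintype n] [DecidableEq n] [CommRing α]
    {A x y : Matrix n n α} (h : SemiconjBy A x y) : SemiconjBy A⁻¹ y x := by
  by_cases hA : IsUnit A.det
  · calc A⁻¹ * y = A⁻¹ * (y * A) * A⁻¹ := by
          rw [mul_assoc, mul_nonsing_inv_cancel_right _ _ hA]
      _ = x * A⁻¹ := by rw [← h.eq, nonsing_inv_mul_cancel_left _ _ hA]
  · simp [SemiconjBy, nonsing_inv_apply_not_isUnit _ hA]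

namespace Matrix

section CommRing

variable {n α : Type*} [Fintype n] [DecidableEq n] [CommRing α]

theorem mul_nonsing_inv_add_smul_mul_comm (A C : Matrix n n α) (s : α) :
    A * (A + s • C)⁻¹ * C = C * (A + s • C)⁻¹ * A := by
  obtain ⟨B, rfl⟩ : ∃ B, A = B - s • C := ⟨A + s • C, (add_sub_cancel_right _ _).symm⟩
  rw [sub_add_cancel]
  -- both sides equal `C - s • (C * B⁻¹ * C)`
  by_cases hB : IsUnit B.det
  · simp [sub_mul, mul_sub, mul_nonsing_inv _ hB, mul_assoc, nonsing_inv_mul _ hB]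
  · simp [nonsing_inv_apply_not_isUnit _ hB]

theorem semiconjBy_transpose_mul_mul {A C : Matrix n n α} (hA : A.IsSymm) (hC : C.IsSymm)
    (hCdet : IsUnit C.det) (s : α) :
    SemiconjBy (((A + s • C)⁻¹ * C)ᵀ * A * ((A + s • C)⁻¹ * C)) (C⁻¹ * A) (A * C⁻¹) := by
  have hcomm := mul_nonsing_inv_add_smul_mul_comm A C s
  set B := A + s • C
  have hBt : B⁻¹ᵀ = B⁻¹ := (hA.add (hC.smul s)).inv
  rw [SemiconjBy, transpose_mul, hBt, hC.eq]
  simp only [mul_assoc, mul_nonsing_inv_cancel_left _ _ hCdet,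
    nonsing_inv_mul_cancel_left _ _ hCdet]
  calc C * (B⁻¹ * (A * (B⁻¹ * A))) = C * B⁻¹ * A * B⁻¹ * A := by simp only [mul_assoc]
    _ = A * B⁻¹ * C * B⁻¹ * A := by rw [hcomm]
    _ = A * B⁻¹ * (C * B⁻¹ * A) := by simp only [mul_assoc]
    _ = A * (B⁻¹ * (A * (B⁻¹ * C))) := by rw [← hcomm]; simp only [mul_assoc]

end CommRing

variable {m : Type*} [Fintype m] [DecidableEq m]

theorem intervalIntegral_mul_units (f : ℝ → Matrix m m ℝ) (u : (Matrix m m ℝ)ˣ) (a b : ℝ) :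
    ∫ s in a..b, f s * u = (∫ s in a..b, f s) * u :=
  ((u.mulRightLinearEquiv ℝ).toContinuousLinearEquiv).intervalIntegral_comp_comm f a b

theorem intervalIntegral_units_mul (f : ℝ → Matrix m m ℝ) (u : (Matrix m m ℝ)ˣ) (a b : ℝ) :
    ∫ s in a..b, (u : Matrix m m ℝ) * f s = u * ∫ s in a..b, f s :=
  ((Units.mulLeftLinearEquiv ℝ _ u).toContinuousLinearEquiv).intervalIntegral_comp_comm f a b

theorem semiconjBy_intervalIntegral {f : ℝ → Matrix m m ℝ} {x y : Matrix m m ℝ} (hx : IsUnit x)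
    (hy : IsUnit y) (h : ∀ s, SemiconjBy (f s) x y) (a b : ℝ) :
    SemiconjBy (∫ s in a..b, f s) x y := by
  obtain ⟨u, rfl⟩ := hx
  obtain ⟨v, rfl⟩ := hy
  rw [SemiconjBy, ← intervalIntegral_mul_units, ← intervalIntegral_units_mul]
  exact integral_congr fun s _ => h s

end Matrix

theorem stmt15_general (n : ℕ) (Sig Sig₀ : Matrix (Fin n) (Fin n) ℝ)
    (hSig : Sig.PosDef) (hSig₀ : Sig₀.PosDef) (T : ℝ) :
    ∀ t ∈ Set.Icc (0:ℝ) T,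
      stmt15Θ n Sig Sig₀ T t * Sig₀⁻¹ * Sig = Sig * Sig₀⁻¹ * stmt15Θ n Sig Sig₀ T t := by
  intro t _
  have hSdet : IsUnit Sig.det := hSig.det_pos.ne'.isUnit
  have hS₀det : IsUnit Sig₀.det := hSig₀.det_pos.ne'.isUnit
  have hK : SemiconjBy (Sig₀⁻¹ + T • Sig⁻¹) (Sig * Sig₀⁻¹) (Sig₀⁻¹ * Sig) := by
    refine SemiconjBy.add_left (mul_assoc _ _ _).symm (SemiconjBy.smul_left ?_ T)
    rw [SemiconjBy, nonsing_inv_mul_cancel_left _ _ hSdet, mul_nonsing_inv_cancel_right _ _ hSdet]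
  have hI : SemiconjBy (∫ s in t..T, (stmt15G n Sig Sig₀ s)ᵀ * Sig * stmt15G n Sig Sig₀ s)
      (Sig₀⁻¹ * Sig) (Sig * Sig₀⁻¹) :=
    semiconjBy_intervalIntegral
      (hSig₀.inv.isUnit.mul hSig.isUnit) (hSig.isUnit.mul hSig₀.inv.isUnit)
      (fun s => semiconjBy_transpose_mul_mul (isHermitian_iff_isSymm.mp hSig.isHermitian)
        (isHermitian_iff_isSymm.mp hSig₀.isHermitian) hS₀det s) t T
  exact (mul_assoc _ _ _).trans (hK.nonsing_inv_symm_left.add_left (hI.smul_left 2)).neg_left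

/-- The symmetry identity `Θ(t)Σ₀⁻¹Σ = ΣΣ₀⁻¹Θ(t)` for all `t ∈ [0,T]`. -/
theorem stmt15 (n : ℕ) (Sig Sig₀ : Matrix (Fin n) (Fin n) ℝ)
    (hSig : Sig.PosDef) (hSig₀ : Sig₀.PosDef) (T : ℝ) (hT : 0 < T) :
    ∀ t ∈ Set.Icc (0:ℝ) T,
      stmt15Θ n Sig Sig₀ T t * Sig₀⁻¹ * Sig = Sig * Sig₀⁻¹ * stmt15Θ n Sig Sig₀ T t :=
  stmt15_general n Sig Sig₀ hSig hSig₀ T
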